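/- Fix M > 0, ℓ > 12M², and E with E² < 1 and E² > E^max(ℓ). Then the equation E_ℓ^Sch(r) = E² has exactly one solution in (2M, ∞), and this solution lies in (r_min^Sch(ℓ), ∞). -/

import Mathlib

/-!
The derivative of `E_ℓ^Sch` is `2M (r - r_max)(r - r_min) / r⁴`, so the potential increases on
`(0, r_max]`, decreases on `[r_max, r_min]` and increases on `[r_min, ∞)` towards its limit `1`.
Hence `E_ℓ^Sch ≤ E^max < E²` on `(0, r_min]`, while on `[r_min, ∞)` it is strictly increasing and
crosses the level `E² < 1` exactly once.
-/

open Set Filter Topology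

/-- The Schwarzschild effective potential `E_ℓ^Sch(r) = (1 - 2M/r)(1 + ℓ/r²)`. -/
noncomputable def Esch (M ℓ r : ℝ) : ℝ := (1 - 2*M/r) * (1 + ℓ/r^2)

/-- `r_max^Sch(ℓ)`, the location of the maximum of the effective potential. -/
noncomputable def rmaxSch (M ℓ : ℝ) : ℝ := ℓ/(2*M) * (1 - Real.sqrt (1 - 12*M^2/ℓ))

/-- `r_min^Sch(ℓ)`, the location of the minimum of the effective potential. -/
noncomputable def rminSch (M ℓ : ℝ) : ℝ := ℓ/(2*M) * (1 + Real.sqrt (1 - 12*M^2/ℓ))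

lemma hasDerivAt_Esch (M ℓ : ℝ) {r : ℝ} (hr : r ≠ 0) :
    HasDerivAt (Esch M ℓ) (2*(M*r^2 - ℓ*r + 3*M*ℓ)/r^4) r := by
  have he : Esch M ℓ = fun r => (1 - 2*M*r⁻¹) * (1 + ℓ*(r^2)⁻¹) := by
    funext x; simp only [Esch, div_eq_mul_inv]
  rw [he]
  refine (((hasDerivAt_const r 1).sub ((hasDerivAt_inv hr).const_mul (2*M))).mul
    ((hasDerivAt_const r 1).add (((hasDerivAt_pow 2 r).inv (pow_ne_zero 2 hr)).const_mul ℓ))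
    ).congr_deriv ?_
  simp only [Pi.sub_apply, Pi.add_apply, Pi.inv_apply]
  field_simp
  ring

lemma continuousOn_Esch (M ℓ : ℝ) : ContinuousOn (Esch M ℓ) (Ioi 0) :=
  fun _ hr => (hasDerivAt_Esch M ℓ (ne_of_gt hr)).continuousAt.continuousWithinAt

lemma tendsto_Esch_atTop (M ℓ : ℝ) : Tendsto (Esch M ℓ) atTop (𝓝 1) := by
  have hM : Tendsto (fun r : ℝ => 1 - 2*M/r) atTop (𝓝 (1 - 0)) :=
    tendsto_const_nhds.sub (tendsto_const_nhds.div_atTop tendsto_id)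
  have hℓ : Tendsto (fun r : ℝ => 1 + ℓ/r^2) atTop (𝓝 (1 + 0)) :=
    tendsto_const_nhds.add (tendsto_const_nhds.div_atTop (tendsto_pow_atTop two_ne_zero))
  have h := hM.mul hℓ
  rw [sub_zero, add_zero, mul_one] at h
  exact h

lemma quadratic_eq_mul_sub_rmaxSch_sub_rminSch {M ℓ : ℝ} (hM : M ≠ 0) (hℓ : 12*M^2 ≤ ℓ)
    (r : ℝ) : M*r^2 - ℓ*r + 3*M*ℓ = M*((r - rmaxSch M ℓ)*(r - rminSch M ℓ)) := by
  have hℓ0 : 0 < ℓ := lt_of_lt_of_le (by positivity) hℓ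
  have hs : ℓ * Real.sqrt (1 - 12*M^2/ℓ) ^ 2 = ℓ - 12*M^2 := by
    rw [Real.sq_sqrt (sub_nonneg.mpr ((div_le_one hℓ0).mpr hℓ))]
    field_simp
  have hsum : M * (rmaxSch M ℓ + rminSch M ℓ) = ℓ := by
    simp only [rmaxSch, rminSch]
    field_simp
    ring
  have hprod : M * (rmaxSch M ℓ * rminSch M ℓ) = 3*M*ℓ := by
    simp only [rmaxSch, rminSch]
    generalize Real.sqrt (1 - 12*M^2/ℓ) = s at hs ⊢
    field_simp
    linear_combination -hs
  linear_combination r * hsum - hprod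

lemma hasDerivAt_Esch_factored {M ℓ r : ℝ} (hM : M ≠ 0) (hℓ : 12*M^2 ≤ ℓ) (hr : r ≠ 0) :
    HasDerivAt (Esch M ℓ) (2*M*((r - rmaxSch M ℓ)*(r - rminSch M ℓ))/r^4) r := by
  convert hasDerivAt_Esch M ℓ hr using 1
  rw [quadratic_eq_mul_sub_rmaxSch_sub_rminSch hM hℓ]
  ring

lemma rmaxSch_pos {M ℓ : ℝ} (hM : 0 < M) (hℓ : 0 < ℓ) : 0 < rmaxSch M ℓ := by
  have hs : Real.sqrt (1 - 12*M^2/ℓ) < 1 := by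
    rw [Real.sqrt_lt' one_pos]
    have : 0 < 12*M^2/ℓ := by positivity
    linarith
  exact mul_pos (by positivity) (sub_pos.mpr hs)

lemma rmaxSch_lt_rminSch {M ℓ : ℝ} (hM : 0 < M) (hℓ : 12*M^2 < ℓ) :
    rmaxSch M ℓ < rminSch M ℓ := by
  have hℓ0 : 0 < ℓ := lt_of_le_of_lt (by positivity) hℓ
  have hs : 0 < Real.sqrt (1 - 12*M^2/ℓ) := by
    rw [Real.sqrt_pos, sub_pos, div_lt_one hℓ0]
    exact hℓ
  unfold rmaxSch rminSch
  gcongr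
  linarith

lemma rminSch_pos {M ℓ : ℝ} (hM : 0 < M) (hℓ : 12*M^2 < ℓ) : 0 < rminSch M ℓ :=
  (rmaxSch_pos hM (lt_of_le_of_lt (by positivity) hℓ)).trans (rmaxSch_lt_rminSch hM hℓ)

section Monotonicity

variable {M ℓ : ℝ} (hM : 0 < M) (hℓ : 12*M^2 ≤ ℓ) {S : Set ℝ} (hS : Convex ℝ S) (hS0 : S ⊆ Ioi 0)
include hM hℓ hS hS0

lemma strictMonoOn_Esch
    (h : ∀ r ∈ interior S, 0 < (r - rmaxSch M ℓ)*(r - rminSch M ℓ)) :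
    StrictMonoOn (Esch M ℓ) S := by
  refine strictMonoOn_of_deriv_pos hS ((continuousOn_Esch M ℓ).mono hS0) fun r hr => ?_
  have hr0 : 0 < r := hS0 (interior_subset hr)
  rw [(hasDerivAt_Esch_factored hM.ne' hℓ hr0.ne').deriv]
  have := h r hr
  positivity

lemma strictAntiOn_Esch
    (h : ∀ r ∈ interior S, (r - rmaxSch M ℓ)*(r - rminSch M ℓ) < 0) :
    StrictAntiOn (Esch M ℓ) S := by
  refine strictAntiOn_of_deriv_neg hS ((continuousOn_Esch M ℓ).mono hS0) fun r hr => ?_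
  have hr0 : 0 < r := hS0 (interior_subset hr)
  rw [(hasDerivAt_Esch_factored hM.ne' hℓ hr0.ne').deriv]
  exact div_neg_of_neg_of_pos (mul_neg_of_pos_of_neg (by positivity) (h r hr)) (by positivity)

end Monotonicity

lemma Esch_le_Esch_rmaxSch {M ℓ r : ℝ} (hM : 0 < M) (hℓ : 12*M^2 < ℓ)
    (hr : r ∈ Ioc 0 (rminSch M ℓ)) :
    Esch M ℓ r ≤ Esch M ℓ (rmaxSch M ℓ) := by
  have hab := rmaxSch_lt_rminSch hM hℓ
  have ha := rmaxSch_pos hM (lt_of_le_of_lt (by positivity) hℓ)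
  rcases le_total r (rmaxSch M ℓ) with hra | hra
  · refine (strictMonoOn_Esch hM hℓ.le (convex_Ioc _ _) Ioc_subset_Ioi_self ?_).monotoneOn
      ⟨hr.1, hra⟩ ⟨ha, le_rfl⟩ hra
    rw [interior_Ioc]
    exact fun x hx => mul_pos_of_neg_of_neg (by linarith [hx.2]) (by linarith [hx.2])
  · refine (strictAntiOn_Esch hM hℓ.le (convex_Icc _ _) ?_ ?_).antitoneOn
      ⟨le_rfl, hab.le⟩ ⟨hra, hr.2⟩ hra
    · exact fun x hx => ha.trans_le hx.1
    · rw [interior_Icc]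
      exact fun x hx => mul_neg_of_pos_of_neg (by linarith [hx.1]) (by linarith [hx.2])

lemma strictMonoOn_Esch_Ici_rminSch {M ℓ : ℝ} (hM : 0 < M) (hℓ : 12*M^2 < ℓ) :
    StrictMonoOn (Esch M ℓ) (Ici (rminSch M ℓ)) := by
  refine strictMonoOn_Esch hM hℓ.le (convex_Ici _)
    (fun x hx => (rminSch_pos hM hℓ).trans_le hx) ?_
  rw [interior_Ici]
  exact fun x hx => mul_pos (by linarith [mem_Ioi.mp hx, rmaxSch_lt_rminSch hM hℓ]) (sub_pos.mpr hx)

lemma exists_gt_eq_of_tendsto_atTop {f : ℝ → ℝ} {b c L : ℝ} (hf : ContinuousOn f (Ici b))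
    (hb : f b < c) (hcL : c < L) (hL : Tendsto f atTop (𝓝 L)) : ∃ r, b < r ∧ f r = c := by
  obtain ⟨R, hbR, hcR⟩ :=
    ((eventually_gt_atTop b).and (hL.eventually (eventually_gt_nhds hcL))).exists
  obtain ⟨r, hr, hfr⟩ := intermediate_value_Ioo hbR.le (hf.mono Icc_subset_Ici_self) ⟨hb, hcR⟩
  exact ⟨r, hr.1, hfr⟩

theorem stmt11 (M ℓ E : ℝ) (hM : 0 < M) (hℓ : 12*M^2 < ℓ) (hE1 : E^2 < 1)
    (hEmax : Esch M ℓ (rmaxSch M ℓ) < E^2) :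
    ∃ r : ℝ, rminSch M ℓ < r ∧ Esch M ℓ r = E^2 ∧
      ∀ r' ∈ Set.Ioi (2*M), Esch M ℓ r' = E^2 → r' = r := by
  have hb := rminSch_pos hM hℓ
  have below : ∀ r ∈ Ioc 0 (rminSch M ℓ), Esch M ℓ r < E^2 :=
    fun r hr => (Esch_le_Esch_rmaxSch hM hℓ hr).trans_lt hEmax
  obtain ⟨r, hbr, hr⟩ := exists_gt_eq_of_tendsto_atTop
    ((continuousOn_Esch M ℓ).mono fun x hx => hb.trans_le hx)
    (below _ ⟨hb, le_rfl⟩) hE1 (tendsto_Esch_atTop M ℓ)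
  refine ⟨r, hbr, hr, fun r' hr' hr'E => ?_⟩
  have hbr' : rminSch M ℓ < r' := by
    by_contra! h
    exact (below r' ⟨(by positivity : (0:ℝ) < 2*M).trans hr', h⟩).ne hr'E
  exact strictMonoOn_Esch_Ici_rminSch hM hℓ |>.injOn hbr'.le hbr.le (hr'E.trans hr.symm)
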